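/- Among all 0-rooted subsets A of ℕ with max(A) ≤ k (i.e., min(A) = 0 and A ⊆ {0,...,k}), the full interval {0,1,...,k} is the unique maximizer of the number of sumset divisors d(A). -/

import Mathlib

open Pointwise

/-- The number of sumset divisors of a finite set of naturals. -/
noncomputable def numDivisors (A : Finset ℕ) : ℕ :=
  {B : Finset ℕ | ∃ C : Finset ℕ, A = B + C}.ncard

/-!
Every divisor `B` of a `0`-rooted set `A ⊆ [0, k]` is a subset of `A` containing `0`. Filling in
the holes of `A` below `m = max B` gives `B' = B ∪ ([0, m] \ A)`, and `B' + [0, k - m] = [0, k]`: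
the top part `[m, k]` comes from `m ∈ B`, the elements of `A` below `m` from `B + C = A`, and the
holes from `B' \ B`. Since `B' ∩ A = B`, this injects the divisors of `A` into those of `[0, k]`.
If `j ≤ k` is missing from `A`, the divisor `[0, j]` of `[0, k]` is not of the form `B'`: its
maximum `j` would be `max B ∈ A`.
-/

open Finset

def sumsetDivisors (A : Finset ℕ) : Set (Finset ℕ) :=
  {B | ∃ C : Finset ℕ, A = B + C}

lemma numDivisors_eq_ncard_sumsetDivisors (A : Finset ℕ) :
    numDivisors A = (sumsetDivisors A).ncard :=
  rfl

lemma zero_mem_of_zero_mem_add {B C : Finset ℕ} (h : 0 ∈ B + C) : 0 ∈ B ∧ 0 ∈ C := by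
  obtain ⟨b, hb, c, hc, hbc⟩ := mem_add.1 h
  obtain ⟨rfl, rfl⟩ : b = 0 ∧ c = 0 := by omega
  exact ⟨hb, hc⟩

section SumsetDivisors

variable {A B : Finset ℕ}

lemma zero_mem_of_mem_sumsetDivisors (h0 : 0 ∈ A) (hB : B ∈ sumsetDivisors A) : 0 ∈ B := by
  obtain ⟨C, rfl⟩ := hB
  exact (zero_mem_of_zero_mem_add h0).1

lemma subset_of_mem_sumsetDivisors (h0 : 0 ∈ A) (hB : B ∈ sumsetDivisors A) : B ⊆ A := by
  obtain ⟨C, rfl⟩ := hB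
  exact subset_add_left B (zero_mem_of_zero_mem_add h0).2

lemma sumsetDivisors_finite (h0 : 0 ∈ A) : (sumsetDivisors A).Finite :=
  A.powerset.finite_toSet.subset fun _ hB ↦ by
    simpa using subset_of_mem_sumsetDivisors h0 hB

lemma sup_id_mem_of_mem_sumsetDivisors (h0 : 0 ∈ A) (hB : B ∈ sumsetDivisors A) :
    B.sup id ∈ B := by
  obtain ⟨b, hb, hsup⟩ := exists_mem_eq_sup B ⟨0, zero_mem_of_mem_sumsetDivisors h0 hB⟩ id
  exact hsup ▸ hb

end SumsetDivisors

lemma range_add_range (a b : ℕ) : range (a + 1) + range (b + 1) = range (a + b + 1) := by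
  ext x
  simp only [mem_add, mem_range]
  constructor
  · rintro ⟨y, hy, z, hz, rfl⟩
    omega
  · intro hx
    exact ⟨min x a, by omega, x - min x a, by omega, by omega⟩

lemma range_mem_sumsetDivisors_range {j k : ℕ} (hjk : j ≤ k) :
    range (j + 1) ∈ sumsetDivisors (range (k + 1)) :=
  ⟨range (k - j + 1), by rw [range_add_range, Nat.add_sub_cancel' hjk]⟩

def fillHoles (A B : Finset ℕ) : Finset ℕ :=
  B ∪ (range (B.sup id + 1) \ A)

section FillHoles

variable {A B : Finset ℕ}

lemma le_sup_id_of_mem_fillHoles {x : ℕ} (hx : x ∈ fillHoles A B) : x ≤ B.sup id := by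
  rcases mem_union.1 hx with hxB | hxHole
  · exact le_sup (f := id) hxB
  · exact mem_range_succ_iff.1 (mem_sdiff.1 hxHole).1

lemma fillHoles_inter_of_subset (hBA : B ⊆ A) : fillHoles A B ∩ A = B := by
  rw [fillHoles, union_inter_distrib_right, inter_eq_left.2 hBA, sdiff_inter_self, union_empty]

lemma range_eq_fillHoles_add {k : ℕ} {C : Finset ℕ} (h0 : 0 ∈ A) (hAk : A ⊆ range (k + 1))
    (hA : A = B + C) : range (k + 1) = fillHoles A B + range (k - B.sup id + 1) := by
  have hB : B ∈ sumsetDivisors A := ⟨C, hA⟩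
  set m := B.sup id
  have hmB : m ∈ B := sup_id_mem_of_mem_sumsetDivisors h0 hB
  have hC : ∀ c ∈ C, m + c ≤ k := fun c hc ↦
    mem_range_succ_iff.1 (hAk (hA ▸ add_mem_add hmB hc))
  have hmk : m ≤ k := mem_range_succ_iff.1 (hAk (subset_of_mem_sumsetDivisors h0 hB hmB))
  ext x
  simp only [mem_add, mem_range]
  constructor
  · intro hx
    by_cases hxm : m ≤ x
    · exact ⟨m, mem_union_left _ hmB, x - m, by omega, by omega⟩
    by_cases hxA : x ∈ A
    · obtain ⟨b, hb, c, hc, rfl⟩ := mem_add.1 (hA ▸ hxA)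
      exact ⟨b, mem_union_left _ hb, c, by have := hC c hc; omega, rfl⟩
    · exact ⟨x, mem_union_right _ (mem_sdiff.2 ⟨mem_range.2 (by omega), hxA⟩), 0, by omega,
        by omega⟩
  · rintro ⟨y, hy, c, hc, rfl⟩
    have := le_sup_id_of_mem_fillHoles hy
    omega

lemma fillHoles_mem_sumsetDivisors_range {k : ℕ} (h0 : 0 ∈ A) (hAk : A ⊆ range (k + 1))
    (hB : B ∈ sumsetDivisors A) : fillHoles A B ∈ sumsetDivisors (range (k + 1)) :=
  let ⟨_, hA⟩ := hB
  ⟨_, range_eq_fillHoles_add h0 hAk hA⟩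

lemma injOn_fillHoles (h0 : 0 ∈ A) : Set.InjOn (fillHoles A) (sumsetDivisors A) :=
  fun B₁ h₁ B₂ h₂ heq ↦ by
    rw [← fillHoles_inter_of_subset (subset_of_mem_sumsetDivisors h0 h₁), heq,
      fillHoles_inter_of_subset (subset_of_mem_sumsetDivisors h0 h₂)]

lemma fillHoles_ne_range {j : ℕ} (h0 : 0 ∈ A) (hjA : j ∉ A) (hB : B ∈ sumsetDivisors A) :
    fillHoles A B ≠ range (j + 1) := by
  intro hfill
  have hmB := sup_id_mem_of_mem_sumsetDivisors h0 hB
  have hmj : B.sup id ≤ j := mem_range_succ_iff.1 (hfill ▸ mem_union_left _ hmB)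
  have hjm : j ≤ B.sup id := le_sup_id_of_mem_fillHoles (hfill ▸ self_mem_range_succ j)
  exact hjA (le_antisymm hmj hjm ▸ subset_of_mem_sumsetDivisors h0 hB hmB)

end FillHoles

theorem stmt16 (k : ℕ) (A : Finset ℕ) (h0 : 0 ∈ A) (hsub : A ⊆ Finset.range (k + 1)) :
    numDivisors A ≤ numDivisors (Finset.range (k + 1)) ∧
      (A ≠ Finset.range (k + 1) →
        numDivisors A < numDivisors (Finset.range (k + 1))) := by
  rw [numDivisors_eq_ncard_sumsetDivisors, numDivisors_eq_ncard_sumsetDivisors]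
  have hfin := sumsetDivisors_finite (mem_range.2 k.succ_pos)
  have hmaps : Set.MapsTo (fillHoles A) (sumsetDivisors A) (sumsetDivisors (range (k + 1))) :=
    fun _ ↦ fillHoles_mem_sumsetDivisors_range h0 hsub
  have hinj := injOn_fillHoles h0
  refine ⟨Set.ncard_le_ncard_of_injOn _ hmaps hinj hfin, fun hne ↦ ?_⟩
  obtain ⟨j, hjk, hjA⟩ : ∃ j ∈ range (k + 1), j ∉ A :=
    not_subset.1 fun h ↦ hne (hsub.antisymm h)
  have hssub : fillHoles A '' sumsetDivisors A ⊂ sumsetDivisors (range (k + 1)) :=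
    ssubset_of_subset_not_subset hmaps.image_subset fun h ↦ by
      obtain ⟨B, hB, hfill⟩ := h (range_mem_sumsetDivisors_range (mem_range_succ_iff.1 hjk))
      exact fillHoles_ne_range h0 hjA hB hfill
  calc (sumsetDivisors A).ncard = (fillHoles A '' sumsetDivisors A).ncard := hinj.ncard_image.symm
    _ < (sumsetDivisors (range (k + 1))).ncard := Set.ncard_lt_ncard hssub hfin
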